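/- Every vector lattice with a cofinal family of band-projections satisfies condition (*): for every band B and every x ∉ B^d, there exists a semi-component of x belonging to B. In particular, any nonzero band-projection [B']x with B' a projection band contained in B is such a semi-component. -/

import Mathlib

/-- Disjointness in a vector lattice. -/
def disjt {X : Type*} [Lattice X] [AddCommGroup X] (x y : X) : Prop := |x| ⊓ |y| = 0

/-- Disjoint complement of a set. -/
def dComp {X : Type*} [Lattice X] [AddCommGroup X] (S : Set X) : Set X :=
  {x | ∀ y ∈ S, disjt x y}

/-- A band (in an Archimedean vector lattice) is a disjoint complement. -/
def IsBand {X : Type*} [Lattice X] [AddCommGroup X] (B : Set X) : Prop :=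
  ∃ S : Set X, B = dComp S

/-- A projection band. -/
def IsProjBand {X : Type*} [Lattice X] [AddCommGroup X] (B : Set X) : Prop :=
  IsBand B ∧ ∀ x : X, ∃ b ∈ B, ∃ c ∈ dComp B, x = b + c

/-- `P` is the band-projection onto the projection band `B`. -/
def IsBandProjOnto {X : Type*} [Lattice X] [AddCommGroup X] [Module ℝ X]
    (B : Set X) (P : X →ₗ[ℝ] X) : Prop :=
  IsProjBand B ∧ ∀ x : X, P x ∈ B ∧ x - P x ∈ dComp B

/-- `P` is a band-projection. -/
def IsBandProj {X : Type*} [Lattice X] [AddCommGroup X] [Module ℝ X]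
    (P : X →ₗ[ℝ] X) : Prop := ∃ B : Set X, IsBandProjOnto B P

/-- A band preserving operator. -/
def BandPreserving {X : Type*} [Lattice X] [AddCommGroup X] [Module ℝ X]
    (T : X →ₗ[ℝ] X) : Prop := ∀ x y : X, disjt x y → disjt (T x) y

/-- A cofinal family of projection bands. -/
def CofinalProjBands (X : Type*) [Lattice X] [AddCommGroup X] : Prop :=
  ∀ B : Set X, IsBand B → B ≠ {0} →
    ∃ B' : Set X, IsProjBand B' ∧ B' ≠ {0} ∧ B' ⊆ B

/-- d-independence of a family (band-free sense). -/
def dIndepFam {X : Type*} [Lattice X] [AddCommGroup X] [Module ℝ X]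
    {ι : Type*} (f : ι → X) : Prop :=
  ∀ B : Set X, IsBand B → ∀ (t : Finset ι) (c : ι → ℝ),
    (∀ j ∈ t, c j ≠ 0) → (∑ j ∈ t, c j • f j) ∈ dComp B → ∀ j ∈ t, f j ∈ dComp B

/-- d-independence of a set (band-free sense). -/
def dIndepSet {X : Type*} [Lattice X] [AddCommGroup X] [Module ℝ X]
    (s : Set X) : Prop := dIndepFam (fun x : s => (x : X))

/-- A full system of pairwise disjoint bands. -/
def FullDisjBands {X : Type*} [Lattice X] [AddCommGroup X] (𝒞 : Set (Set X)) : Prop :=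
  (∀ B ∈ 𝒞, IsBand B) ∧
  (∀ B ∈ 𝒞, ∀ B' ∈ 𝒞, B ≠ B' → ∀ a ∈ B, ∀ b ∈ B', disjt a b) ∧
  (∀ z : X, (∀ B ∈ 𝒞, z ∈ dComp B) → z = 0)

/-- A d-basis (band-free sense). -/
def IsDBasis {X : Type*} [Lattice X] [AddCommGroup X] [Module ℝ X]
    (s : Set X) : Prop :=
  dIndepSet s ∧ ∀ x : X, ∃ 𝒞 : Set (Set X), FullDisjBands 𝒞 ∧
    ∀ B ∈ 𝒞, ∃ (t : Finset X) (c : X → ℝ), (↑t ⊆ s) ∧ (∀ e ∈ t, c e ≠ 0) ∧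
      (x - ∑ e ∈ t, c e • e) ∈ dComp B

/-- `b` is a semi-component of `x`. -/
def IsSemiComponent {X : Type*} [Lattice X] [AddCommGroup X] [Module ℝ X]
    (x b : X) : Prop :=
  b ≠ 0 ∧ ∃ (𝒞 : Set (Set X)) (c : Set X → ℝ), FullDisjBands 𝒞 ∧
    ∀ B ∈ 𝒞, (b - c B • x) ∈ dComp B

/-- Condition (*): every band has a semi-component of every element not disjoint from it. -/
def CondStar (X : Type*) [Lattice X] [AddCommGroup X] [Module ℝ X] : Prop :=
  ∀ B : Set X, IsBand B → ∀ x : X, x ∉ dComp B → ∃ b ∈ B, IsSemiComponent x b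
/-- Projection-band-sense d-independence of a family. -/
def dIndepProjFam {X : Type*} [Lattice X] [AddCommGroup X] [Module ℝ X]
    {ι : Type*} (f : ι → X) : Prop :=
  ∀ (B : Set X) (P : X →ₗ[ℝ] X), IsBandProjOnto B P →
    ∀ (t : Finset ι) (c : ι → ℝ), (∑ j ∈ t, c j • P (f j)) = 0 →
      ∀ j ∈ t, P (f j) ≠ 0 → c j = 0

/-- Projection-band-sense d-independence of a set. -/
def dIndepProjSet {X : Type*} [Lattice X] [AddCommGroup X] [Module ℝ X]
    (s : Set X) : Prop := dIndepProjFam (fun x : s => (x : X))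

/-- Lateral completeness. -/
def LatComplete (X : Type*) [Lattice X] [AddCommGroup X] : Prop :=
  ∀ S : Set X, (∀ x ∈ S, 0 ≤ x) → S.Pairwise disjt → ∃ b : X, IsLUB S b

/-- Lateral completeness of a subset (sups taken relative to the subset). -/
def LatCompleteIn {X : Type*} [Lattice X] [AddCommGroup X] (X₀ : Set X) : Prop :=
  ∀ S : Set X, S ⊆ X₀ → (∀ x ∈ S, 0 ≤ x) → S.Pairwise disjt →
    ∃ b ∈ X₀, b ∈ upperBounds S ∧ ∀ b' ∈ X₀, b' ∈ upperBounds S → b ≤ b'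

/-- Dedekind completeness of a subset (sups relative to the subset). -/
def DedekindCompleteIn {X : Type*} [Lattice X] [AddCommGroup X] (X₀ : Set X) : Prop :=
  ∀ S : Set X, S ⊆ X₀ → S.Nonempty → (∃ u ∈ X₀, u ∈ upperBounds S) →
    ∃ b ∈ X₀, b ∈ upperBounds S ∧ ∀ b' ∈ X₀, b' ∈ upperBounds S → b ≤ b'

/-- Universal completeness of a subset. -/
def UnivCompleteIn {X : Type*} [Lattice X] [AddCommGroup X] (X₀ : Set X) : Prop :=
  LatCompleteIn X₀ ∧ DedekindCompleteIn X₀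

/-- Disjoint complement of `S` relative to the sublattice `X₀`. -/
def dCompIn {X : Type*} [Lattice X] [AddCommGroup X] (X₀ S : Set X) : Set X :=
  {x | x ∈ X₀ ∧ ∀ y ∈ S, disjt x y}

/-- Bands of the sublattice `X₀`. -/
def IsBandIn {X : Type*} [Lattice X] [AddCommGroup X] (X₀ B : Set X) : Prop :=
  ∃ S : Set X, S ⊆ X₀ ∧ B = dCompIn X₀ S

/-- Projection bands of the sublattice `X₀`. -/
def IsProjBandIn {X : Type*} [Lattice X] [AddCommGroup X] (X₀ B : Set X) : Prop :=
  IsBandIn X₀ B ∧ ∀ x ∈ X₀, ∃ b ∈ B, ∃ c ∈ dCompIn X₀ B, x = b + c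

/-- A band `B` is principally universally complete if each of its principal bands
is universally complete. -/
def PrincUnivCompleteIn {X : Type*} [Lattice X] [AddCommGroup X] (B : Set X) : Prop :=
  ∀ u ∈ B, UnivCompleteIn (dCompIn B (dCompIn B {u}))

/-- d-independence of a family relative to the sublattice `X₀`. -/
def dIndepFamIn {X : Type*} [Lattice X] [AddCommGroup X] [Module ℝ X]
    (X₀ : Set X) {ι : Type*} (f : ι → X) : Prop :=
  ∀ B : Set X, IsBandIn X₀ B → ∀ (t : Finset ι) (c : ι → ℝ),
    (∀ j ∈ t, c j ≠ 0) → (∑ j ∈ t, c j • f j) ∈ dCompIn X₀ B →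
      ∀ j ∈ t, f j ∈ dCompIn X₀ B

/-- A full system of pairwise disjoint bands of the sublattice `X₀`. -/
def FullDisjBandsIn {X : Type*} [Lattice X] [AddCommGroup X]
    (X₀ : Set X) (𝒞 : Set (Set X)) : Prop :=
  (∀ B ∈ 𝒞, IsBandIn X₀ B) ∧
  (∀ B ∈ 𝒞, ∀ B' ∈ 𝒞, B ≠ B' → ∀ a ∈ B, ∀ b ∈ B', disjt a b) ∧
  (∀ z ∈ X₀, (∀ B ∈ 𝒞, z ∈ dCompIn X₀ B) → z = 0)

/-- A d-basis of the sublattice `X₀`. -/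
def IsDBasisIn {X : Type*} [Lattice X] [AddCommGroup X] [Module ℝ X]
    (X₀ : Set X) (s : Set X) : Prop :=
  dIndepFamIn X₀ (fun x : s => (x : X)) ∧
  ∀ x ∈ X₀, ∃ 𝒞 : Set (Set X), FullDisjBandsIn X₀ 𝒞 ∧
    ∀ B ∈ 𝒞, ∃ (t : Finset X) (c : X → ℝ), (↑t ⊆ s) ∧ (∀ e ∈ t, c e ≠ 0) ∧
      (x - ∑ e ∈ t, c e • e) ∈ dCompIn X₀ B

/-- An essentially constant continuous function. -/
def EssConst {K : Type*} [TopologicalSpace K] (f : C(K, ℝ)) : Prop :=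
  ∀ G : Set K, IsOpen G → G.Nonempty →
    ∃ G₁ ⊆ G, IsOpen G₁ ∧ G₁.Nonempty ∧ ∃ c : ℝ, ∀ t ∈ G₁, f t = c


/-
A band `B` that is not disjoint from `x` contains some `y` with `w = |x| ⊓ |y| ≠ 0`, and the
principal band `{w}ᵈᵈ` lies in `B`. By cofinality it contains a nonzero projection band `B'`.
Writing `x = b + c` with `b ∈ B'`, `c ∈ B'ᵈ`, the component `b` is nonzero (a nonzero element of
`B'` disjoint from `x` would be disjoint from `w`, hence from itself), and it is a semi-component
of `x` with respect to the full system `{B', B'ᵈ}` and the scalars `1, 0`.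
-/

section Disjointness

variable {X : Type*} [Lattice X] [AddCommGroup X]

theorem disjt.symm {x y : X} (h : disjt x y) : disjt y x := by
  rwa [disjt, inf_comm]

theorem disjt_neg_left_iff {x y : X} : disjt (-x) y ↔ disjt x y := by
  rw [disjt, disjt, abs_neg]

theorem dComp_anti {S T : Set X} (h : S ⊆ T) : dComp T ⊆ dComp S :=
  fun _ hx y hy => hx y (h hy)

theorem subset_dComp_dComp (S : Set X) : S ⊆ dComp (dComp S) :=
  fun _ hx _ hy => (hy _ hx).symm

theorem neg_mem_dComp {S : Set X} {x : X} (h : x ∈ dComp S) : -x ∈ dComp S :=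
  fun y hy => disjt_neg_left_iff.2 (h y hy)

theorem IsBand.dComp_dComp_singleton_subset {B : Set X} (hB : IsBand B) {w : X} (hw : w ∈ B) :
    dComp (dComp {w}) ⊆ B := by
  obtain ⟨S, rfl⟩ := hB
  exact dComp_anti <| (subset_dComp_dComp S).trans <| dComp_anti <| Set.singleton_subset_iff.2 hw

variable [AddLeftMono X]

theorem inf_add_le_inf_add_inf {a b c : X} (ha : 0 ≤ a) (hb : 0 ≤ b) (hc : 0 ≤ c) :
    a ⊓ (b + c) ≤ a ⊓ b + a ⊓ c := by
  rw [inf_add, add_inf, add_inf]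
  exact le_inf (le_inf (inf_le_left.trans (le_add_of_nonneg_right ha))
      (inf_le_left.trans (le_add_of_nonneg_right hc)))
    (le_inf (inf_le_left.trans (le_add_of_nonneg_left hb)) inf_le_right)

theorem disjt.mono_left {x x' y : X} (h : disjt x y) (hle : |x'| ≤ |x|) : disjt x' y :=
  le_antisymm (h ▸ inf_le_inf_right _ hle) (le_inf (abs_nonneg _) (abs_nonneg _))

theorem disjt.add_right {x y z : X} (hy : disjt x y) (hz : disjt x z) : disjt x (y + z) := by
  refine le_antisymm ?_ (le_inf (abs_nonneg _) (abs_nonneg _))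
  calc |x| ⊓ |y + z| ≤ |x| ⊓ (|y| + |z|) := inf_le_inf_left _ (abs_add_le y z)
    _ ≤ |x| ⊓ |y| + |x| ⊓ |z| :=
        inf_add_le_inf_add_inf (abs_nonneg x) (abs_nonneg y) (abs_nonneg z)
    _ = 0 := by rw [hy, hz, add_zero]

theorem eq_zero_of_disjt_self {x : X} (h : disjt x x) : x = 0 := by
  rw [disjt, inf_idem] at h
  exact le_antisymm (h ▸ le_abs_self x) (neg_nonpos.1 (h ▸ neg_le_abs x))

theorem eq_zero_of_mem_of_mem_dComp {S : Set X} {x : X} (hS : x ∈ S) (hx : x ∈ dComp S) :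
    x = 0 :=
  eq_zero_of_disjt_self (hx x hS)

theorem zero_mem_dComp (S : Set X) : (0 : X) ∈ dComp S :=
  fun y _ => by rw [disjt, abs_zero]; exact inf_eq_left.2 (abs_nonneg y)

theorem IsBand.exists_ne_zero {B : Set X} (hB : IsBand B) (hne : B ≠ {0}) : ∃ b ∈ B, b ≠ 0 := by
  obtain ⟨S, rfl⟩ := hB
  by_contra! h
  exact hne (Set.eq_singleton_iff_unique_mem.2 ⟨zero_mem_dComp S, h⟩)

theorem IsBand.mem_of_abs_le {B : Set X} (hB : IsBand B) {x y : X} (hy : y ∈ B)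
    (hxy : |x| ≤ |y|) : x ∈ B := by
  obtain ⟨S, rfl⟩ := hB
  exact fun z hz => (hy z hz).mono_left hxy

theorem IsBand.notMem_dComp_of_subset_dComp_dComp {B : Set X} (hB : IsBand B) (hB0 : B ≠ {0})
    {w x : X} (hBw : B ⊆ dComp (dComp {w})) (hwx : |w| ≤ |x|) : x ∉ dComp B := by
  intro hx
  obtain ⟨b, hb, hb0⟩ := hB.exists_ne_zero hB0
  have hbw : b ∈ dComp {w} := by
    rintro _ rfl
    exact ((hx b hb).mono_left hwx).symm
  exact hb0 (eq_zero_of_mem_of_mem_dComp hbw (hBw hb))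

theorem IsProjBand.fullDisjBands_pair {B : Set X} (hB : IsProjBand B) :
    FullDisjBands {B, dComp B} := by
  refine ⟨?_, ?_, ?_⟩
  · rintro C (rfl | rfl)
    exacts [hB.1, ⟨B, rfl⟩]
  · rintro C (rfl | rfl) D (rfl | rfl) hne a ha d hd
    exacts [absurd rfl hne, (hd a ha).symm, ha d hd, absurd rfl hne]
  · intro z hz
    obtain ⟨b, hb, c, hc, rfl⟩ := hB.2 z
    exact eq_zero_of_disjt_self <|
      (hz B (by simp) b hb).add_right (hz (dComp B) (by simp) c hc)

end Disjointness

theorem IsProjBand.isSemiComponent {X : Type*} [Lattice X] [AddCommGroup X] [Module ℝ X]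
    [AddLeftMono X] {B : Set X} (hB : IsProjBand B) {x b : X} (hb : b ∈ B)
    (hxb : x - b ∈ dComp B) (hb0 : b ≠ 0) : IsSemiComponent x b := by
  classical
  refine ⟨hb0, {B, dComp B}, fun C => if C = B then 1 else 0, hB.fullDisjBands_pair, ?_⟩
  intro C hC
  by_cases hCB : C = B
  · subst hCB
    simp only [↓reduceIte, one_smul]
    rw [← neg_sub]
    exact neg_mem_dComp hxb
  · obtain rfl : C = dComp B := hC.resolve_left hCB
    simpa [hCB] using subset_dComp_dComp B hb

theorem IsProjBand.exists_isSemiComponent_mem {X : Type*} [Lattice X] [AddCommGroup X]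
    [Module ℝ X] [AddLeftMono X] {B : Set X} (hB : IsProjBand B) {x : X} (hx : x ∉ dComp B) :
    ∃ b ∈ B, IsSemiComponent x b := by
  obtain ⟨b, hb, c, hc, rfl⟩ := hB.2 x
  refine ⟨b, hb, hB.isSemiComponent hb (by simpa using hc) ?_⟩
  rintro rfl
  exact hx (by simpa using hc)

theorem CofinalProjBands.condStar {X : Type*} [Lattice X] [AddCommGroup X] [Module ℝ X]
    [AddLeftMono X] (hcof : CofinalProjBands X) : CondStar X := by
  intro B hB x hx
  obtain ⟨y, hyB, hxy⟩ : ∃ y ∈ B, ¬disjt x y := by simpa [dComp] using hx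
  set w := |x| ⊓ |y|
  have hw : |w| = w := abs_of_nonneg (le_inf (abs_nonneg x) (abs_nonneg y))
  have hwB : w ∈ B := hB.mem_of_abs_le hyB (hw.trans_le inf_le_right)
  have hB0 : dComp (dComp {w}) ≠ {0} := fun h =>
    hxy ((Set.eq_singleton_iff_unique_mem.1 h).2 w (subset_dComp_dComp _ rfl))
  obtain ⟨B', hB', hB'0, hB'w⟩ := hcof _ ⟨_, rfl⟩ hB0
  obtain ⟨b, hb, hxb⟩ := hB'.exists_isSemiComponent_mem
    (hB'.1.notMem_dComp_of_subset_dComp_dComp hB'0 hB'w (hw.trans_le inf_le_left))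
  exact ⟨b, hB.dComp_dComp_singleton_subset hwB (hB'w hb), hxb⟩

theorem cofinalProjBands_implies_condStar_general
    {X : Type*} [Lattice X] [AddCommGroup X] [Module ℝ X]
    [CovariantClass X X (· + ·) (· ≤ ·)]
    (hcof : CofinalProjBands X) :
    CondStar X ∧
      ∀ B : Set X, IsBand B → ∀ x : X, x ∉ dComp B →
        ∀ (B' : Set X) (P : X →ₗ[ℝ] X), B' ⊆ B → IsBandProjOnto B' P →
          P x ≠ 0 → P x ∈ B ∧ IsSemiComponent x (P x) := by
  refine ⟨hcof.condStar, fun B _ x _ B' P hB'B hP hPx => ?_⟩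
  obtain ⟨hB', hPB'⟩ := hP
  exact ⟨hB'B (hPB' x).1, hB'.isSemiComponent (hPB' x).1 (hPB' x).2 hPx⟩

/-- Every vector lattice with a cofinal family of band-projections
satisfies condition (*); in particular, any nonzero band-projection of `x` onto a
projection band contained in `B` is a semi-component of `x` in `B`. -/
theorem cofinalProjBands_implies_condStar
    {X : Type*} [Lattice X] [AddCommGroup X] [Module ℝ X]
    [CovariantClass X X (· + ·) (· ≤ ·)] [PosSMulMono ℝ X]
    (hcof : CofinalProjBands X) :
    CondStar X ∧
      ∀ B : Set X, IsBand B → ∀ x : X, x ∉ dComp B →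
        ∀ (B' : Set X) (P : X →ₗ[ℝ] X), B' ⊆ B → IsBandProjOnto B' P →
          P x ≠ 0 → P x ∈ B ∧ IsSemiComponent x (P x) :=
  cofinalProjBands_implies_condStar_general hcof
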